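/- For every function f : ℕ → ℕ, every dimension d ≥ 1, every number of colors k ≥ 1 and every a ∈ ℕ, there exists R ∈ ℕ such that for every coloring C of the d-element subsets of {a, a+1, ..., R} with k colors there exists a C-homogeneous set H with |H| ≥ f(min H). -/

import Mathlib

/-!
If the theorem failed, every `R` would have a bad colouring `C R`. Their limit `D` along a
nonprincipal ultrafilter agrees with `C R` on the subsets of any finite set for many `R`.
By the infinite Ramsey theorem `D` has an infinite homogeneous set `H ⊆ [a, ∞)`; the least element
`m` of `H` together with `f m` further elements of `H` is a finite `D`-homogeneous set `G` with
`f (min G) ≤ |G|`. For some `R ≥ max G` the colouring `C R` agrees with `D` on the subsets of `G`,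
so `G` is a good set for `C R`, a contradiction.
-/

/-- `H` is homogeneous for the colouring `C` of `d`-element finite sets:
`C` is constant on the `d`-element subsets of `H`. -/
def HomogF (k d : ℕ) (C : Finset ℕ → Fin k) (H : Finset ℕ) : Prop :=
  ∃ c : Fin k, ∀ s : Finset ℕ, s ⊆ H → s.card = d → C s = c

/-- Homogeneity for a (possibly infinite) set `H ⊆ ℕ`. -/
def HomogS (k d : ℕ) (C : Finset ℕ → Fin k) (H : Set ℕ) : Prop :=
  ∃ c : Fin k, ∀ s : Finset ℕ, ↑s ⊆ H → s.card = d → C s = c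

/-- `F` is asymptotically stable: on every increasing chain of finite sets
the value of `F` eventually stabilises. -/
def AsympStable (F : Finset ℕ → ℕ) : Prop :=
  ∀ X : ℕ → Finset ℕ, (∀ i, X i ⊆ X (i + 1)) →
    ∃ i, ∀ j, i ≤ j → F (X j) = F (X i)

open Set Filter

theorem Set.Infinite.exists_infinite_inter_fiber {α β : Type*} [Finite β] {B : Set α}
    (hB : B.Infinite) (c : α → β) : ∃ i, (B ∩ c ⁻¹' {i}).Infinite := by
  by_contra! h
  exact hB ((finite_iUnion h).subset fun x hx => mem_iUnion.2 ⟨c x, hx, rfl⟩)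

theorem Set.Infinite.inter_Ioi {S : Set ℕ} (hS : S.Infinite) (a : ℕ) : (S ∩ Ioi a).Infinite := by
  simpa [sdiff_eq] using hS.sdiff (finite_Iic a)

/-- Iterating `step` along `T₀ = S`, `Tₙ₊₁ = T'(Tₙ)` gives pivots `aₙ ∈ Tₙ`; every later
pivot lies in `Tₙ₊₁`, so the set of pivots satisfies `P` above each of its elements. -/
theorem exists_infinite_subset_of_pivot {P : ℕ → Set ℕ → Prop}
    (hP : ∀ a {T T'}, T' ⊆ T → P a T → P a T')
    (step : ∀ T : Set ℕ, T.Infinite → ∃ a ∈ T, ∃ T' ⊆ T ∩ Ioi a, T'.Infinite ∧ P a T')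
    {S : Set ℕ} (hS : S.Infinite) :
    ∃ B ⊆ S, B.Infinite ∧ ∀ b ∈ B, P b (B ∩ Ioi b) := by
  choose pivot hpivot next hnext hnext_inf hnextP using step
  let T : ℕ → {T : Set ℕ // T.Infinite} :=
    fun n => (fun T => ⟨next T.1 T.2, hnext_inf T.1 T.2⟩)^[n] ⟨S, hS⟩
  let a : ℕ → ℕ := fun n => pivot (T n).1 (T n).2
  have hT_succ : ∀ n, (T (n + 1)).1 = next (T n).1 (T n).2 := fun n =>
    congrArg Subtype.val (Function.iterate_succ_apply' _ n _)
  have hT_anti : Antitone fun n => (T n).1 := antitone_nat_of_succ_le fun n =>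
    (hT_succ n).trans_subset ((hnext _ _).trans inter_subset_left)
  have ha_mem : ∀ n, a n ∈ (T n).1 := fun n => hpivot _ _
  have ha_mono : StrictMono a := strictMono_nat_of_lt_succ fun n =>
    (hnext _ _ (hT_succ n ▸ ha_mem (n + 1))).2
  refine ⟨range a, range_subset_iff.2 fun n => hT_anti n.zero_le (ha_mem n),
    infinite_range_of_injective ha_mono.injective, ?_⟩
  rintro _ ⟨n, rfl⟩
  refine hP _ ?_ (hnextP (T n).1 (T n).2)
  rintro _ ⟨⟨m, rfl⟩, hm⟩
  exact hT_succ n ▸ hT_anti (ha_mono.lt_iff_lt.1 hm) (ha_mem m)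

section Homogeneity

variable {k d : ℕ} {C C' : Finset ℕ → Fin k}

theorem HomogS.mono {T T' : Set ℕ} (hT : HomogS k d C T) (h : T' ⊆ T) : HomogS k d C T' :=
  hT.imp fun _ hc s hs => hc s (hs.trans h)

theorem HomogS.homogF {H : Set ℕ} {G : Finset ℕ} (hH : HomogS k d C H) (hG : ↑G ⊆ H) :
    HomogF k d C G :=
  hH.imp fun _ hc s hs => hc s ((Finset.coe_subset.2 hs).trans hG)

theorem HomogF.congr {G : Finset ℕ} (hG : HomogF k d C G) (h : ∀ s ⊆ G, C s = C' s) :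
    HomogF k d C' G :=
  hG.imp fun _ hc s hs hd => h s hs ▸ hc s hs hd

/-- A `(d+1)`-set inside a colour class of the pivot colours gets the pivot colour of its least
element. -/
theorem exists_infinite_homogS_of_pivots {B : Set ℕ} (hB : B.Infinite)
    (hpivot : ∀ b ∈ B, HomogS k d (fun t => C (insert b t)) (B ∩ Ioi b)) :
    ∃ H ⊆ B, H.Infinite ∧ HomogS k (d + 1) C H := by
  have : Nonempty (Fin k) := ⟨(hpivot _ hB.nonempty.some_mem).choose⟩
  choose! c hc using hpivot
  obtain ⟨c₀, hc₀⟩ := hB.exists_infinite_inter_fiber c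
  refine ⟨B ∩ c ⁻¹' {c₀}, inter_subset_left, hc₀, c₀, fun s hs hcard => ?_⟩
  have hne : s.Nonempty := Finset.card_pos.1 (by omega)
  obtain ⟨hmB, hmc⟩ := hs (s.min'_mem hne)
  have hrest : ↑(s.erase (s.min' hne)) ⊆ B ∩ Ioi (s.min' hne) := fun x hx =>
    have hx := Finset.mem_erase.1 hx
    ⟨(hs hx.2).1, lt_of_le_of_ne (s.min'_le x hx.2) (Ne.symm hx.1)⟩
  rw [← Finset.insert_erase (s.min'_mem hne)]
  exact (hc _ hmB _ hrest (by simp [hcard, s.min'_mem])).trans hmc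

theorem exists_infinite_homogS (C : Finset ℕ → Fin k) (d : ℕ) {S : Set ℕ} (hS : S.Infinite) :
    ∃ H ⊆ S, H.Infinite ∧ HomogS k d C H := by
  induction d generalizing C S with
  | zero => exact ⟨S, subset_rfl, hS, C ∅, fun s _ hs => by rw [Finset.card_eq_zero.1 hs]⟩
  | succ d ih =>
    obtain ⟨B, hBS, hB, hpivot⟩ := exists_infinite_subset_of_pivot
      (P := fun b T => HomogS k d (fun t => C (insert b t)) T) (fun _ _ _ h hT => hT.mono h)
      (fun T hT => by
        obtain ⟨b, hb⟩ := hT.nonempty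
        exact ⟨b, hb, ih _ (hT.inter_Ioi b)⟩) hS
    obtain ⟨H, hHB, hH, hHhom⟩ := exists_infinite_homogS_of_pivots hB hpivot
    exact ⟨H, hHB.trans hBS, hH, hHhom⟩

theorem Set.Infinite.exists_finset_apply_min'_le_card {H : Set ℕ} (hH : H.Infinite) (f : ℕ → ℕ) :
    ∃ G : Finset ℕ, ↑G ⊆ H ∧ ∃ hG : G.Nonempty, f (G.min' hG) ≤ G.card := by
  obtain ⟨m, hm⟩ := hH.nonempty
  obtain ⟨t, ht, htcard⟩ := (hH.inter_Ioi m).exists_subset_card_eq (f m)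
  have hmt : m ∉ t := fun h => lt_irrefl m (ht h).2
  refine ⟨insert m t, by simpa [insert_subset_iff, hm] using ht.trans inter_subset_left,
    Finset.insert_nonempty m t, ?_⟩
  have hmin : (insert m t).min' (Finset.insert_nonempty m t) = m :=
    le_antisymm (Finset.min'_le _ _ (Finset.mem_insert_self m t))
      (Finset.le_min' _ _ _ fun y hy =>
        (Finset.mem_insert.1 hy).elim ge_of_eq fun hy => (ht hy).2.le)
  rw [hmin, Finset.card_insert_of_notMem hmt, htcard]
  exact Nat.le_succ _

theorem Ultrafilter.exists_eventually_eq_on_subsets {ι : Type*} (U : Ultrafilter ι)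
    (C : ι → Finset ℕ → Fin k) :
    ∃ D : Finset ℕ → Fin k, ∀ G : Finset ℕ, ∀ᶠ R in U, ∀ s ⊆ G, C R s = D s := by
  choose D hD using fun s => (U.eventually_exists_iff (P := fun c R => C R s = c)).1
    (Eventually.of_forall fun R => ⟨_, rfl⟩)
  refine ⟨D, fun G => ?_⟩
  filter_upwards [(eventually_all_finset G.powerset).2 fun s _ => hD s] with R hR s hs
  exact hR s (Finset.mem_powerset.2 hs)

end Homogeneity

theorem parametrized_paris_harrington_general
    (f : ℕ → ℕ) (d k a : ℕ) :
    ∃ R : ℕ, ∀ C : Finset ℕ → Fin k,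
      ∃ H : Finset ℕ, ↑H ⊆ Finset.Icc a R ∧ HomogF k d C H ∧
        ∃ hH : H.Nonempty, f (H.min' hH) ≤ H.card := by
  by_contra! hbad
  choose C hC using hbad
  obtain ⟨D, hD⟩ := (hyperfilter ℕ).exists_eventually_eq_on_subsets C
  obtain ⟨H, hHa, hH, hHhom⟩ := exists_infinite_homogS D d (Set.Ici_infinite a)
  obtain ⟨G, hGH, hGne, hGcard⟩ := hH.exists_finset_apply_min'_le_card f
  have hGbound : ∀ᶠ R in hyperfilter ℕ, ∀ x ∈ G, x ≤ R :=
    Nat.hyperfilter_le_atTop <| (eventually_all_finset G).2 fun x _ => eventually_ge_atTop x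
  obtain ⟨R, hCD, hGR⟩ := ((hD G).and hGbound).exists
  have hGIcc : ↑G ⊆ Finset.Icc a R := fun x hx =>
    Finset.mem_Icc.2 ⟨hHa (hGH hx), hGR x hx⟩
  exact (hC R G hGIcc ((hHhom.homogF hGH).congr fun s hs => (hCD s hs).symm) hGne).not_ge hGcard

theorem parametrized_paris_harrington
    (f : ℕ → ℕ) (d k a : ℕ) (hd : 1 ≤ d) (hk : 1 ≤ k) :
    ∃ R : ℕ, ∀ C : Finset ℕ → Fin k,
      ∃ H : Finset ℕ, ↑H ⊆ Finset.Icc a R ∧ HomogF k d C H ∧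
        ∃ hH : H.Nonempty, f (H.min' hH) ≤ H.card :=
  parametrized_paris_harrington_general f d k a
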